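/- Let n > m ≥ 0 and define H(j,k) = (−1)^{b(j,k)} for j, k ∈ {0, …, 2ⁿ − 1}, where b(j,k) is the number of bit positions at which the binary expansions of j and k both have a 1. For 0 ≤ i ≤ 2^{n−m} − 1, let W_i be the span in ℝ^{2ⁿ−2^m} of the vectors (H(j, i·2^m + r))_{2^m ≤ j ≤ 2ⁿ−1} for 0 ≤ r ≤ 2^m − 1, with orthogonal projections P_i. Then {W_i}_{i=0}^{2^{n−m}−1} is an equi-distance tight fusion frame for ℝ^{2ⁿ−2^m} consisting of 2^{n−m} subspaces of dimension 2^m: ∑_i P_i = (2ⁿ/(2ⁿ − 2^m)) · Id, each dim W_i = 2^m, and all pairwise chordal distances dist(W_{i₁}, W_{i₂}) (i₁ ≠ i₂) are equal. -/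

import Mathlib

/-!
The spanning vectors of the `W i` are the columns `v k` of the Sylvester matrix `H` with its first
`2 ^ m` rows deleted. The columns of `H` are orthogonal of squared norm `2 ^ n`, and the deleted
rows `j < 2 ^ m` only see `k % 2 ^ m` (they form the Sylvester matrix of order `2 ^ m`), so
`⟪v k, v l⟫ = 2 ^ n δ(k, l) - 2 ^ m δ(k % 2 ^ m, l % 2 ^ m)`. Hence each block
`(v (i * 2 ^ m + r))ᵣ` is orthogonal with squared norms `2 ^ n - 2 ^ m`, which gives the dimension
and the projection `P i = (2 ^ n - 2 ^ m)⁻¹ ∑ᵣ v vᵀ`. Summed over all blocks this is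
`(2 ^ n - 2 ^ m)⁻¹ ∑ₖ v vᵀ = 2 ^ n / (2 ^ n - 2 ^ m) • id`, because the remaining rows of `H` are
still orthogonal. For `i₁ ≠ i₂` the cross Gram matrix of two blocks is `-2 ^ m • 1`, so
`trace (P i₁ * P i₂) = 2 ^ m (2 ^ m / (2 ^ n - 2 ^ m)) ^ 2` does not depend on the pair.
-/

open scoped InnerProductSpace

def bitOverlap (j k : ℕ) : ℕ := (Nat.land j k).bits.count true

open Finset Submodule

section OrthogonalFamily

variable {E ι : Type*} [NormedAddCommGroup E] [InnerProductSpace ℝ E] [Fintype ι]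
  [DecidableEq ι] {v w : ι → E} {c : ℝ}

theorem finrank_span_eq_card_of_inner_eq_ite (hc : c ≠ 0)
    (hv : ∀ a b, ⟪v a, v b⟫_ℝ = if a = b then c else 0) :
    Module.finrank ℝ (span ℝ (Set.range v)) = Fintype.card ι := by
  refine finrank_span_eq_card (linearIndependent_of_ne_zero_of_inner_eq_zero (𝕜 := ℝ)
    (fun a ha => hc ?_) fun a b hab => by simp [hv, hab])
  simpa [ha] using (hv a a).symm

variable [FiniteDimensional ℝ E]

theorem starProjection_span_eq_sum (hc : c ≠ 0)
    (hv : ∀ a b, ⟪v a, v b⟫_ℝ = if a = b then c else 0) (x : E) :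
    (span ℝ (Set.range v)).starProjection x = ∑ a, (c⁻¹ * ⟪v a, x⟫_ℝ) • v a := by
  refine eq_starProjection_of_mem_of_inner_eq_zero
    (sum_mem fun a _ => smul_mem _ _ (subset_span ⟨a, rfl⟩)) fun y hy => ?_
  obtain ⟨t, rfl⟩ := (mem_span_range_iff_exists_fun ℝ).mp hy
  have hperp : ∀ b, ⟪x - ∑ a, (c⁻¹ * ⟪v a, x⟫_ℝ) • v a, v b⟫_ℝ = 0 := by
    intro b
    simp only [inner_sub_left, real_inner_comm (v b) x, sum_inner, real_inner_smul_left, hv,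
      mul_ite, mul_zero, sum_ite_eq', mem_univ, if_true]
    field_simp
    ring
  simp [inner_sum, real_inner_smul_right, hperp]

theorem trace_starProjection_comp_starProjection (hc : c ≠ 0)
    (hv : ∀ a b, ⟪v a, v b⟫_ℝ = if a = b then c else 0)
    (hw : ∀ a b, ⟪w a, w b⟫_ℝ = if a = b then c else 0) :
    LinearMap.trace ℝ E ((span ℝ (Set.range v)).starProjection ∘L
        (span ℝ (Set.range w)).starProjection).toLinearMap =
      c⁻¹ ^ 2 * ∑ a, ∑ b, ⟪v a, w b⟫_ℝ ^ 2 := by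
  set Q := (span ℝ (Set.range w)).starProjection
  have hT : ((span ℝ (Set.range v)).starProjection ∘L Q).toLinearMap =
      ∑ a, (c⁻¹ • InnerProductSpace.rankOne ℝ (v a) (Q (v a))).toLinearMap := by
    ext x
    change (span ℝ (Set.range v)).starProjection (Q x) = _
    rw [starProjection_span_eq_sum hc hv]
    simp [InnerProductSpace.rankOne_apply, Q, inner_starProjection_left_eq_right, mul_smul]
  rw [hT, map_sum]
  simp [InnerProductSpace.trace_rankOne, Q, starProjection_span_eq_sum hc hw, mul_sum, sq,
    real_inner_comm, mul_assoc]

end OrthogonalFamily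

theorem sum_inner_smul_eq_smul_of_sum_mul_eq {ι κ : Type*} [Fintype ι] [DecidableEq ι]
    (s : Finset κ) (v : κ → EuclideanSpace ℝ ι) (c : ℝ)
    (hv : ∀ j j', ∑ k ∈ s, v k j * v k j' = if j = j' then c else 0) (x : EuclideanSpace ℝ ι) :
    ∑ k ∈ s, ⟪v k, x⟫_ℝ • v k = c • x := by
  ext j
  simp only [WithLp.ofLp_sum, WithLp.ofLp_smul, Finset.sum_apply, Pi.smul_apply, smul_eq_mul,
    PiLp.inner_apply, RCLike.inner_apply, conj_trivial, sum_mul]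
  rw [sum_comm]
  simp_rw [mul_assoc, ← mul_sum, hv, mul_ite, mul_zero, sum_ite_eq', mem_univ, if_true, mul_comm]

theorem sum_range_two_mul_eq_sum_bit {M : Type*} [AddCommMonoid M] (f : ℕ → M) (N : ℕ) :
    ∑ j ∈ range (2 * N), f j = ∑ j ∈ range N, (f (Nat.bit false j) + f (Nat.bit true j)) := by
  induction N with
  | zero => simp
  | succ N ih =>
    rw [Nat.mul_succ, sum_range_succ, sum_range_succ, sum_range_succ, ih, add_assoc]
    simp [Nat.bit_val]

theorem sum_fin_sum_fin_mul_add {M : Type*} [AddCommMonoid M] (f : ℕ → M) (a b : ℕ) :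
    ∑ i : Fin a, ∑ r : Fin b, f (i * b + r) = ∑ k ∈ range (a * b), f k := by
  rw [← Fin.sum_univ_eq_sum_range, ← finProdFinEquiv.sum_comp, Fintype.sum_prod_type]
  simp [finProdFinEquiv, add_comm, mul_comm]

theorem count_true_bits_bit (b : Bool) (x : ℕ) :
    (Nat.bit b x).bits.count true = x.bits.count true + b.toNat := by
  by_cases h : x = 0 ∧ b = false
  · obtain ⟨rfl, rfl⟩ := h
    rfl
  · rw [Nat.bits_append_bit x b fun hx => by cases b <;> simp_all, List.count_cons]
    cases b <;> simp

theorem bitOverlap_def (j k : ℕ) : bitOverlap j k = (j &&& k).bits.count true := rfl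

theorem bitOverlap_comm (j k : ℕ) : bitOverlap j k = bitOverlap k j := by
  rw [bitOverlap_def, bitOverlap_def, Nat.land_comm]

theorem bitOverlap_bit (a b : Bool) (j k : ℕ) :
    bitOverlap (Nat.bit a j) (Nat.bit b k) = bitOverlap j k + (a && b).toNat := by
  rw [bitOverlap_def, Nat.land_bit, count_true_bits_bit, bitOverlap_def]

theorem bitOverlap_mod_two_pow {j : ℕ} (k : ℕ) {m : ℕ} (hj : j < 2 ^ m) :
    bitOverlap j (k % 2 ^ m) = bitOverlap j k := by
  have : j &&& (k % 2 ^ m) = j &&& k := by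
    rw [← Nat.and_two_pow_sub_one_eq_mod, Nat.land_comm k, ← Nat.land_assoc,
      Nat.and_two_pow_sub_one_eq_mod, Nat.mod_eq_of_lt hj]
  rw [bitOverlap_def, bitOverlap_def, this]

noncomputable def walsh (j k : ℕ) : ℝ := (-1) ^ bitOverlap j k

theorem walsh_comm (j k : ℕ) : walsh j k = walsh k j := by
  rw [walsh, walsh, bitOverlap_comm]

theorem walsh_bit (a b : Bool) (j k : ℕ) :
    walsh (Nat.bit a j) (Nat.bit b k) = (-1) ^ (a && b).toNat * walsh j k := by
  rw [walsh, walsh, bitOverlap_bit, pow_add, mul_comm]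

theorem sum_walsh_mul_walsh (n : ℕ) {k l : ℕ} (hk : k < 2 ^ n) (hl : l < 2 ^ n) :
    ∑ j ∈ range (2 ^ n), walsh j k * walsh j l = if k = l then (2 ^ n : ℝ) else 0 := by
  induction n generalizing k l with
  | zero =>
    rw [Nat.lt_one_iff.mp hk, Nat.lt_one_iff.mp hl]
    simp [walsh, bitOverlap]
  | succ n ih =>
    obtain ⟨b, k, rfl⟩ : ∃ b k', Nat.bit b k' = k := ⟨_, _, Nat.bit_bodd_div2 k⟩
    obtain ⟨c, l, rfl⟩ : ∃ c l', Nat.bit c l' = l := ⟨_, _, Nat.bit_bodd_div2 l⟩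
    rw [Nat.bit_lt_two_pow_succ_iff] at hk hl
    have hsplit : ∀ j,
        walsh (Nat.bit false j) (Nat.bit b k) * walsh (Nat.bit false j) (Nat.bit c l) +
          walsh (Nat.bit true j) (Nat.bit b k) * walsh (Nat.bit true j) (Nat.bit c l) =
        (1 + (-1) ^ (b.toNat + c.toNat)) * (walsh j k * walsh j l) := by
      intro j
      simp only [walsh_bit, Bool.false_and, Bool.true_and, Bool.toNat_false, pow_zero, pow_add]
      ring
    rw [pow_succ', sum_range_two_mul_eq_sum_bit, sum_congr rfl fun j _ => hsplit j, ← mul_sum,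
      ih hk hl]
    have hbit : Nat.bit b k = Nat.bit c l ↔ b = c ∧ k = l := by
      cases b <;> cases c <;> simp [Nat.bit_val] <;> omega
    rw [if_congr hbit rfl rfl]
    cases b <;> cases c <;> by_cases h : k = l <;> simp [h] <;> ring

theorem sum_Ico_walsh_mul_walsh {m n : ℕ} (hmn : m ≤ n) {k l : ℕ} (hk : k < 2 ^ n)
    (hl : l < 2 ^ n) :
    ∑ j ∈ Ico (2 ^ m) (2 ^ n), walsh j k * walsh j l =
      (if k = l then (2 ^ n : ℝ) else 0) - if k % 2 ^ m = l % 2 ^ m then (2 ^ m : ℝ) else 0 := by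
  have hlow : ∑ j ∈ range (2 ^ m), walsh j k * walsh j l =
      if k % 2 ^ m = l % 2 ^ m then (2 ^ m : ℝ) else 0 := by
    rw [← sum_walsh_mul_walsh m (Nat.mod_lt k (by positivity)) (Nat.mod_lt l (by positivity))]
    refine sum_congr rfl fun j hj => ?_
    rw [mem_range] at hj
    simp only [walsh, bitOverlap_mod_two_pow _ hj]
  rw [← sum_walsh_mul_walsh n hk hl, ← hlow,
    ← sum_range_add_sum_Ico _ (Nat.pow_le_pow_right two_pos hmn), add_sub_cancel_left]

/-- The `k`-th column of the Sylvester matrix of order `2 ^ n` without its first `2 ^ m` rows. -/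
noncomputable def walshVec (n m k : ℕ) : EuclideanSpace ℝ (Fin (2 ^ n - 2 ^ m)) :=
  WithLp.toLp 2 fun j => walsh (j + 2 ^ m) k

theorem inner_walshVec {m n : ℕ} (hmn : m ≤ n) {k l : ℕ} (hk : k < 2 ^ n) (hl : l < 2 ^ n) :
    ⟪walshVec n m k, walshVec n m l⟫_ℝ =
      (if k = l then (2 ^ n : ℝ) else 0) - if k % 2 ^ m = l % 2 ^ m then (2 ^ m : ℝ) else 0 := by
  rw [← sum_Ico_walsh_mul_walsh hmn hk hl, sum_Ico_eq_sum_range, ← Fin.sum_univ_eq_sum_range]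
  simp [walshVec, PiLp.inner_apply, add_comm, mul_comm]

theorem sum_inner_walshVec_smul {m n : ℕ} (x : EuclideanSpace ℝ (Fin (2 ^ n - 2 ^ m))) :
    ∑ k ∈ range (2 ^ n), ⟪walshVec n m k, x⟫_ℝ • walshVec n m k = (2 ^ n : ℝ) • x := by
  refine sum_inner_smul_eq_smul_of_sum_mul_eq _ _ _ (fun j j' => ?_) x
  have hj : (j : ℕ) + 2 ^ m < 2 ^ n := by omega
  have hj' : (j' : ℕ) + 2 ^ m < 2 ^ n := by omega
  have hswap : ∀ k,
      walshVec n m k j * walshVec n m k j' = walsh k (j + 2 ^ m) * walsh k (j' + 2 ^ m) :=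
    fun k => by simp only [walshVec]; rw [walsh_comm, walsh_comm _ k]
  simp only [hswap, sum_walsh_mul_walsh n hj hj', add_left_inj, Fin.val_inj]

noncomputable def walshBlock (n m : ℕ) (i : ℕ) (r : Fin (2 ^ m)) :
    EuclideanSpace ℝ (Fin (2 ^ n - 2 ^ m)) :=
  walshVec n m (i * 2 ^ m + r)

section WalshBlock

variable {m n : ℕ}

theorem inner_walshBlock (hmn : m ≤ n) (i i' : Fin (2 ^ (n - m))) (r r' : Fin (2 ^ m)) :
    ⟪walshBlock n m i r, walshBlock n m i' r'⟫_ℝ =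
      if r = r' then (if i = i' then (2 ^ n : ℝ) - 2 ^ m else -2 ^ m) else 0 := by
  have hlt : ∀ (i : Fin (2 ^ (n - m))) (r : Fin (2 ^ m)), (i : ℕ) * 2 ^ m + r < 2 ^ n := by
    intro i r
    calc (i : ℕ) * 2 ^ m + r < (i + 1) * 2 ^ m := by
          rw [add_one_mul]; exact Nat.add_lt_add_left r.isLt _
      _ ≤ 2 ^ (n - m) * 2 ^ m := Nat.mul_le_mul_right _ i.isLt
      _ = 2 ^ n := by rw [← pow_add, Nat.sub_add_cancel hmn]
  have hmod : ∀ (i : Fin (2 ^ (n - m))) (r : Fin (2 ^ m)), ((i : ℕ) * 2 ^ m + r) % 2 ^ m = r :=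
    fun i r => by rw [add_comm, Nat.add_mul_mod_self_right, Nat.mod_eq_of_lt r.isLt]
  rw [walshBlock, walshBlock, inner_walshVec hmn (hlt i r) (hlt i' r'), hmod, hmod]
  by_cases hr : r = r'
  · subst hr
    by_cases hi : i = i'
    · simp [hi]
    · simp [hi, Fin.val_inj]
  · have hne : (i : ℕ) * 2 ^ m + r ≠ i' * 2 ^ m + r' := fun h => hr (Fin.ext (by
      rw [← hmod i r, ← hmod i' r', h]))
    simp [hr, hne, Fin.val_inj]

theorem inner_walshBlock_self (hmn : m ≤ n) (i : Fin (2 ^ (n - m))) (r r' : Fin (2 ^ m)) :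
    ⟪walshBlock n m i r, walshBlock n m i r'⟫_ℝ = if r = r' then (2 ^ n : ℝ) - 2 ^ m else 0 := by
  simp [inner_walshBlock hmn]

theorem two_pow_sub_two_pow_ne_zero (hmn : m < n) : (2 ^ n : ℝ) - 2 ^ m ≠ 0 :=
  (sub_pos.mpr (pow_lt_pow_right₀ one_lt_two hmn)).ne'

theorem finrank_span_walshBlock (hmn : m < n) (i : Fin (2 ^ (n - m))) :
    Module.finrank ℝ (span ℝ (Set.range (walshBlock n m i))) = 2 ^ m := by
  rw [finrank_span_eq_card_of_inner_eq_ite (two_pow_sub_two_pow_ne_zero hmn)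
    (inner_walshBlock_self hmn.le i), Fintype.card_fin]

theorem sum_starProjection_span_walshBlock (hmn : m < n)
    (x : EuclideanSpace ℝ (Fin (2 ^ n - 2 ^ m))) :
    ∑ i : Fin (2 ^ (n - m)), (span ℝ (Set.range (walshBlock n m i))).starProjection x =
      ((2 ^ n : ℝ) / ((2 ^ n : ℝ) - 2 ^ m)) • x := by
  simp_rw [starProjection_span_eq_sum (two_pow_sub_two_pow_ne_zero hmn)
    (inner_walshBlock_self hmn.le _), mul_smul, ← smul_sum]
  simp only [walshBlock]
  rw [sum_fin_sum_fin_mul_add (fun k => ⟪walshVec n m k, x⟫_ℝ • walshVec n m k),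
    ← pow_add, Nat.sub_add_cancel hmn.le, sum_inner_walshVec_smul, smul_smul, div_eq_inv_mul]

theorem trace_starProjection_span_walshBlock (hmn : m < n) {i₁ i₂ : Fin (2 ^ (n - m))}
    (hne : i₁ ≠ i₂) :
    LinearMap.trace ℝ _ ((span ℝ (Set.range (walshBlock n m i₁))).starProjection ∘L
        (span ℝ (Set.range (walshBlock n m i₂))).starProjection).toLinearMap =
      2 ^ m * (2 ^ m / ((2 ^ n : ℝ) - 2 ^ m)) ^ 2 := by
  have hc := two_pow_sub_two_pow_ne_zero hmn
  rw [trace_starProjection_comp_starProjection hc (inner_walshBlock_self hmn.le i₁)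
    (inner_walshBlock_self hmn.le i₂)]
  simp only [inner_walshBlock hmn.le, hne, if_false, ite_pow, even_two.neg_pow,
    zero_pow two_ne_zero, sum_ite_eq, mem_univ, if_true, sum_const, card_univ, Fintype.card_fin,
    nsmul_eq_mul, Nat.cast_pow, Nat.cast_ofNat]
  field_simp

end WalshBlock

/-- The Walsh–Hadamard construction yields an equi-distance tight fusion frame
for `ℝ^{2ⁿ−2^m}` consisting of `2^{n−m}` subspaces of dimension `2^m`:
`∑ i, P_i = (2ⁿ/(2ⁿ − 2^m)) · Id`, each `dim W_i = 2^m`, and all pairwise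
chordal distances `√(2^m − trace(P_{i₁} P_{i₂}))` (`i₁ ≠ i₂`) are equal. -/
theorem stmt_16 (n m : ℕ) (hmn : m < n)
    (W : Fin (2 ^ (n - m)) → Submodule ℝ (EuclideanSpace ℝ (Fin (2 ^ n - 2 ^ m))))
    (hW : ∀ i : Fin (2 ^ (n - m)),
      W i = Submodule.span ℝ (Set.range (fun r : Fin (2 ^ m) =>
        (WithLp.toLp 2 (fun j : Fin (2 ^ n - 2 ^ m) =>
          ((-1 : ℝ) ^ bitOverlap (j.val + 2 ^ m) (i.val * 2 ^ m + r.val))) :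
            EuclideanSpace ℝ (Fin (2 ^ n - 2 ^ m)))))) :
    (∀ x : EuclideanSpace ℝ (Fin (2 ^ n - 2 ^ m)),
        (∑ i : Fin (2 ^ (n - m)),
            ((W i).orthogonalProjectionOnto x : EuclideanSpace ℝ (Fin (2 ^ n - 2 ^ m)))) =
          ((2 ^ n : ℝ) / ((2 ^ n : ℝ) - 2 ^ m)) • x) ∧
      (∀ i : Fin (2 ^ (n - m)), Module.finrank ℝ ↥(W i) = 2 ^ m) ∧
      (∃ d : ℝ, ∀ i₁ i₂ : Fin (2 ^ (n - m)), i₁ ≠ i₂ →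
        Real.sqrt ((2 ^ m : ℝ) -
            LinearMap.trace ℝ (EuclideanSpace ℝ (Fin (2 ^ n - 2 ^ m)))
              ((((W i₁).subtypeL.comp (W i₁).orthogonalProjectionOnto).comp
                ((W i₂).subtypeL.comp (W i₂).orthogonalProjectionOnto)).toLinearMap)) = d) := by
  obtain rfl : W = fun i : Fin (2 ^ (n - m)) => span ℝ (Set.range (walshBlock n m i)) := funext hW
  exact ⟨sum_starProjection_span_walshBlock hmn, finrank_span_walshBlock hmn,
    _, fun i₁ i₂ hne => by
      rw [← starProjection.eq_def, ← starProjection.eq_def,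
        trace_starProjection_span_walshBlock hmn hne]⟩
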